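/- arXiv:2010.01449 — 4 statements merged into one kernel-verified Lean document; each statement's English description precedes it below -/
import Mathlib

section
/- Let f(w) = (1/2) wᵀ A w + bᵀ w + (ρ/3)‖w‖³ with A symmetric, ρ > 0, and let w* be a global minimizer. Then ρ‖w*‖ ≥ −λ_min(A) and ∇f(w*) = (A + ρ‖w*‖ I) w* + b = 0, and for any w ∈ ℝ^d: ⟨w − w*, ∇f(w)⟩ = (w − w*)ᵀ (A* + (ρ/2)(‖w‖ − ‖w*‖) I)(w − w*) + (ρ/2)(‖w*‖ − ‖w‖)²(‖w‖ + ‖w*‖), where A* = A + ρ‖w*‖ I. -/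
set_option maxHeartbeats 4000000

open scoped RealInnerProductSpace

lemma sqrtCube_hasDerivAt (c : ℝ) (hc : 0 ≤ c) :
    HasDerivAt (fun x : ℝ => x * Real.sqrt x) (3 / 2 * Real.sqrt c) c := by
  rcases eq_or_lt_of_le hc with h | h
  · rw [← h, Real.sqrt_zero, mul_zero]
    rw [hasDerivAt_iff_tendsto_slope]
    have : ∀ x : ℝ, x ≠ 0 → slope (fun x : ℝ => x * Real.sqrt x) 0 x = Real.sqrt x := by
      intro x hx
      simp [slope, hx, mul_comm, mul_div_assoc, div_self hx]
    have hcont : Filter.Tendsto Real.sqrt (nhdsWithin 0 {(0:ℝ)}ᶜ) (nhds 0) := by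
      have h2 : Filter.Tendsto Real.sqrt (nhds 0) (nhds (Real.sqrt 0)) :=
        Real.continuous_sqrt.tendsto 0
      rw [Real.sqrt_zero] at h2
      exact h2.mono_left nhdsWithin_le_nhds
    refine hcont.congr' ?_
    filter_upwards [self_mem_nhdsWithin] with x hx
    exact (this x hx).symm
  · have hs := Real.hasDerivAt_sqrt (ne_of_gt h)
    have : HasDerivAt (fun x : ℝ => x * Real.sqrt x) (1 * Real.sqrt c + c * (1 / (2 * Real.sqrt c))) c :=
      (hasDerivAt_id c).mul hs
    convert this using 1
    have hsc : (0:ℝ) < Real.sqrt c := Real.sqrt_pos.mpr h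
    have hcs : Real.sqrt c * Real.sqrt c = c := Real.mul_self_sqrt hc
    field_simp
    nlinarith [hcs]

lemma poly2_hasDerivAt (a b c : ℝ) : HasDerivAt (fun t : ℝ => a + b * t + c * t ^ 2) b 0 := by
  have h : HasDerivAt (fun t : ℝ => a + b * t + c * t ^ 2) _ 0 := ((hasDerivAt_const (0:ℝ) a).add (((hasDerivAt_id (0:ℝ)).const_mul b))).add
    ((hasDerivAt_pow 2 (0:ℝ)).const_mul c)
  simpa using h

lemma eq_of_sq_eq_sq' {a b : ℝ} (ha : 0 ≤ a) (hb : 0 ≤ b) (h : a ^ 2 = b ^ 2) : a = b := by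
  rcases mul_eq_zero.mp (show (a - b) * (a + b) = 0 by nlinarith) with h' | h'
  · linarith
  · linarith

lemma pos_of_small (x C : ℝ) (hC : 0 ≤ C)
    (h : ∀ t : ℝ, 0 < t → t ≤ 1 → -(C * t) ≤ x) : 0 ≤ x := by
  by_contra h'
  push_neg at h'
  have hC1 : (0:ℝ) < C + 1 := by linarith
  set t : ℝ := min 1 (-x / (C + 1)) with ht
  have ht0 : 0 < t := lt_min one_pos (div_pos (by linarith) hC1)
  have ht1 : t ≤ 1 := min_le_left _ _
  have ht2 : t ≤ -x / (C + 1) := min_le_right _ _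
  have hCt : C * t ≤ C * (-x / (C + 1)) := mul_le_mul_of_nonneg_left ht2 hC
  have hdiv : C * (-x / (C + 1)) * (C + 1) = C * (-x) := by field_simp
  have := h t ht0 ht1
  nlinarith

/-- Characterization of the global minimizer of the cubic-regularized problem
`f(w) = ½ wᵀAw + bᵀw + (ρ/3)‖w‖³`: `ρ‖w*‖ ≥ −λ_min(A)`, the gradient vanishes
at `w*`, and the gradient decomposition identity holds for every `w`. -/
theorem stmt_7 (d : ℕ)
    (A : EuclideanSpace ℝ (Fin d) →L[ℝ] EuclideanSpace ℝ (Fin d))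
    (hA : IsSelfAdjoint A) (b : EuclideanSpace ℝ (Fin d)) (ρ : ℝ) (hρ : 0 < ρ)
    (wstar : EuclideanSpace ℝ (Fin d))
    (hmin : ∀ w : EuclideanSpace ℝ (Fin d),
      (1 / 2) * ⟪wstar, A wstar⟫ + ⟪b, wstar⟫ + (ρ / 3) * ‖wstar‖ ^ 3 ≤
        (1 / 2) * ⟪w, A w⟫ + ⟪b, w⟫ + (ρ / 3) * ‖w‖ ^ 3) :
    ρ * ‖wstar‖ ≥ -(sInf (spectrum ℝ A)) ∧
    A wstar + (ρ * ‖wstar‖) • wstar + b = 0 ∧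
    ∀ w : EuclideanSpace ℝ (Fin d),
      ⟪w - wstar, A w + b + (ρ * ‖w‖) • w⟫ =
        (⟪w - wstar, A (w - wstar)⟫
          + (ρ * ‖wstar‖ + (ρ / 2) * (‖w‖ - ‖wstar‖)) * ‖w - wstar‖ ^ 2)
        + (ρ / 2) * (‖wstar‖ - ‖w‖) ^ 2 * (‖w‖ + ‖wstar‖) := by
  have hgrad : A wstar + (ρ * ‖wstar‖) • wstar + b = 0 := by
    have hsym := (ContinuousLinearMap.isSelfAdjoint_iff_isSymmetric.mp hA)
    have key : ∀ v : EuclideanSpace ℝ (Fin d),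
        ⟪A wstar + (ρ * ‖wstar‖) • wstar + b, v⟫ = 0 := by
      intro v
      set f : EuclideanSpace ℝ (Fin d) → ℝ :=
        fun w => (1 / 2) * ⟪w, A w⟫ + ⟪b, w⟫ + (ρ / 3) * ‖w‖ ^ 3 with hf
      -- the squared-norm along the line
      have hq : ∀ t : ℝ, ‖wstar + t • v‖ ^ 2
          = ‖wstar‖ ^ 2 + (2 * ⟪wstar, v⟫) * t + ‖v‖ ^ 2 * t ^ 2 := by
        intro t
        rw [@norm_add_sq_real, real_inner_smul_right, norm_smul]
        simp only [mul_pow, Real.norm_eq_abs, sq_abs]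
        ring
      have hq' : HasDerivAt (fun t : ℝ => ‖wstar + t • v‖ ^ 2) (2 * ⟪wstar, v⟫) 0 := by
        have := poly2_hasDerivAt (‖wstar‖ ^ 2) (2 * ⟪wstar, v⟫) (‖v‖ ^ 2)
        exact this.congr_of_eventuallyEq (Filter.Eventually.of_forall fun t => (hq t))
      -- cube derivative
      have hcube : HasDerivAt (fun t : ℝ => ‖wstar + t • v‖ ^ 3)
          (3 * ‖wstar‖ * ⟪wstar, v⟫) 0 := by
        have hc0 : (fun t : ℝ => ‖wstar + t • v‖ ^ 2) 0 = ‖wstar‖ ^ 2 := by simp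
        have hf' : HasDerivAt (fun x : ℝ => x * Real.sqrt x) (3 / 2 * Real.sqrt (‖wstar‖ ^ 2))
            ((fun t : ℝ => ‖wstar + t • v‖ ^ 2) 0) := by
          rw [hc0]; exact sqrtCube_hasDerivAt _ (by positivity)
        have hcomp := hf'.comp 0 hq'
        have heq : ∀ t : ℝ, ((fun x : ℝ => x * Real.sqrt x) ∘ fun t : ℝ => ‖wstar + t • v‖ ^ 2) t
            = ‖wstar + t • v‖ ^ 3 := by
          intro t
          simp only [Function.comp, Real.sqrt_sq (norm_nonneg _)]
          ring
        have hval : 3 / 2 * Real.sqrt (‖wstar‖ ^ 2) * (2 * ⟪wstar, v⟫)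
            = 3 * ‖wstar‖ * ⟪wstar, v⟫ := by
          rw [Real.sqrt_sq (norm_nonneg _)]; ring
        rw [hval] at hcomp
        exact hcomp.congr_of_eventuallyEq (Filter.Eventually.of_forall fun t => (heq t).symm)
      -- quadratic part
      have hquad : HasDerivAt (fun t : ℝ => (1 / 2) * ⟪wstar + t • v, A (wstar + t • v)⟫)
          ⟪A wstar, v⟫ 0 := by
        have hexp : ∀ t : ℝ, (1 / 2) * ⟪wstar + t • v, A (wstar + t • v)⟫
            = (1 / 2) * ⟪wstar, A wstar⟫ + ⟪A wstar, v⟫ * t + ((1 / 2) * ⟪v, A v⟫) * t ^ 2 := by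
          intro t
          have h1 : ⟪A wstar, v⟫ = ⟪wstar, A v⟫ := hsym wstar v
          have h2 : ⟪v, A wstar⟫ = ⟪A wstar, v⟫ := real_inner_comm _ _
          simp only [map_add, map_smul, inner_add_left, inner_add_right,
            real_inner_smul_left, real_inner_smul_right]
          linear_combination (t / 2) * h2 - (t / 2) * h1
        have := poly2_hasDerivAt ((1 / 2) * ⟪wstar, A wstar⟫) ⟪A wstar, v⟫ ((1 / 2) * ⟪v, A v⟫)
        exact this.congr_of_eventuallyEq (Filter.Eventually.of_forall fun t => (hexp t))
      -- linear part
      have hlin : HasDerivAt (fun t : ℝ => ⟪b, wstar + t • v⟫) ⟪b, v⟫ 0 := by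
        have hexp : ∀ t : ℝ, ⟪b, wstar + t • v⟫ = ⟪b, wstar⟫ + ⟪b, v⟫ * t + 0 * t ^ 2 := by
          intro t
          simp only [inner_add_right, real_inner_smul_right]
          ring
        have := poly2_hasDerivAt ⟪b, wstar⟫ ⟪b, v⟫ 0
        exact this.congr_of_eventuallyEq (Filter.Eventually.of_forall fun t => (hexp t))
      have hg : HasDerivAt (fun t : ℝ => f (wstar + t • v))
          (⟪A wstar, v⟫ + ⟪b, v⟫ + (ρ / 3) * (3 * ‖wstar‖ * ⟪wstar, v⟫)) 0 :=
        (hquad.add hlin).add (hcube.const_mul (ρ / 3))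
      have hlocal : IsLocalMin (fun t : ℝ => f (wstar + t • v)) 0 := by
        apply Filter.Eventually.of_forall
        intro t
        have h0 : wstar + (0:ℝ) • v = wstar := by simp
        simp only [h0]
        exact hmin (wstar + t • v)
      have hzero := hlocal.hasDerivAt_eq_zero hg
      rw [inner_add_left, inner_add_left, real_inner_smul_left]
      linear_combination hzero
    have := key (A wstar + (ρ * ‖wstar‖) • wstar + b)
    rwa [real_inner_self_eq_norm_sq, pow_eq_zero_iff (by norm_num), norm_eq_zero] at this
  have hb : b = -(A wstar + (ρ * ‖wstar‖) • wstar) :=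
    eq_neg_of_add_eq_zero_right hgrad
  refine ⟨?_, hgrad, ?_⟩
  · -- spectral bound
    have hsym0 := (ContinuousLinearMap.isSelfAdjoint_iff_isSymmetric.mp hA)
    have hsym : ∀ a b' : EuclideanSpace ℝ (Fin d), ⟪A a, b'⟫ = ⟪a, A b'⟫ := fun a b' => hsym0 a b'
    rcases (spectrum ℝ A).eq_empty_or_nonempty with hs | hs
    · rw [hs, Real.sInf_empty, neg_zero]
      positivity
    · rw [ge_iff_le, neg_le]
      refine le_csInf hs ?_
      intro μ hμ
      -- extract an eigenvector
      have hμ' : ¬IsUnit ((algebraMap ℝ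
          (EuclideanSpace ℝ (Fin d) →L[ℝ] EuclideanSpace ℝ (Fin d)) μ) - A) :=
        spectrum.mem_iff.mp hμ
      have hnb : ¬Function.Bijective ((algebraMap ℝ
          (EuclideanSpace ℝ (Fin d) →L[ℝ] EuclideanSpace ℝ (Fin d)) μ) - A) :=
        fun hbij => hμ' (ContinuousLinearMap.isUnit_iff_bijective.mpr hbij)
      have hni : ¬Function.Injective ((algebraMap ℝ
          (EuclideanSpace ℝ (Fin d) →L[ℝ] EuclideanSpace ℝ (Fin d)) μ) - A) := by
        intro hinj
        exact hnb ⟨hinj, (LinearMap.injective_iff_surjective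
          (f := ((algebraMap ℝ (EuclideanSpace ℝ (Fin d) →L[ℝ] EuclideanSpace ℝ (Fin d)) μ)
            - A).toLinearMap)).mp hinj⟩
      obtain ⟨x, y, hxy, hne⟩ := Function.not_injective_iff.mp hni
      have hv0 : x - y ≠ 0 := sub_ne_zero.mpr hne
      have hAv : A (x - y) = μ • (x - y) := by
        have h0 : ((algebraMap ℝ
            (EuclideanSpace ℝ (Fin d) →L[ℝ] EuclideanSpace ℝ (Fin d)) μ) - A) (x - y) = 0 := by
          rw [map_sub, hxy, sub_self]
        rw [ContinuousLinearMap.sub_apply, sub_eq_zero] at h0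
        rw [← h0, Algebra.algebraMap_eq_smul_one]
        simp
      set u : EuclideanSpace ℝ (Fin d) := ‖x - y‖⁻¹ • (x - y) with hu
      have hu1 : ‖u‖ = 1 := norm_smul_inv_norm hv0
      have hAu : A u = μ • u := by
        rw [hu, map_smul, hAv, smul_comm]
      -- the key scalar inequality
      set c : ℝ := ‖wstar‖ with hc
      set p : ℝ := ⟪wstar, u⟫ with hp
      have hc0 : 0 ≤ c := norm_nonneg _
      have hkey : ∀ t : ℝ, 0 ≤ (1 / 2) * μ * t ^ 2 - ρ * c * (t * p)
          + (ρ / 3) * (‖wstar + t • u‖ ^ 3 - c ^ 3) := by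
        intro t
        have h1 := hmin (wstar + t • u)
        have hwAu : ⟪wstar, A u⟫ = μ * p := by
          rw [hAu, real_inner_smul_right, hp, real_inner_comm]
        have huAw : ⟪u, A wstar⟫ = μ * p := by
          rw [real_inner_comm, hsym wstar u, hwAu]
        have hAwu : ⟪A wstar, u⟫ = μ * p := by rw [hsym wstar u, hwAu]
        have huAu : ⟪u, A u⟫ = μ := by
          rw [hAu, real_inner_smul_right, real_inner_self_eq_norm_sq, hu1]; ring
        have hpuw : ⟪u, wstar⟫ = p := by rw [real_inner_comm]
        rw [hb] at h1
        simp only [map_add, map_smul, inner_add_left, inner_add_right, inner_neg_left,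
          inner_neg_right, real_inner_smul_left, real_inner_smul_right,
          real_inner_self_eq_norm_sq] at h1
        simp only [hwAu, huAw, huAu, hAwu, hpuw, ← hc, ← hp] at h1
        nlinarith [h1]
      -- the squared norm
      have hnsq : ∀ t : ℝ, ‖wstar + t • u‖ ^ 2 = c ^ 2 + 2 * p * t + t ^ 2 := by
        intro t
        rw [@norm_add_sq_real, real_inner_smul_right, norm_smul]
        simp only [mul_pow, Real.norm_eq_abs, sq_abs, hu1]
        rw [← hc, ← hp]; ring
      rcases eq_or_ne p 0 with hp0 | hp0
      · -- orthogonal case: limit argument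
        have hgoal : 0 ≤ μ + ρ * c := by
          rcases eq_or_lt_of_le hc0 with hceq | hcpos
          · -- wstar = 0
            rw [← hceq, mul_zero, add_zero]
            refine pos_of_small _ (2 * ρ / 3) (by positivity) ?_
            intro t ht0 ht1
            have hk := hkey t
            have hn3 : ‖wstar + t • u‖ ^ 3 = t ^ 3 := by
              have h2 : ‖wstar + t • u‖ ^ 2 = t ^ 2 := by rw [hnsq t, ← hceq, hp0]; ring
              rw [eq_of_sq_eq_sq' (norm_nonneg (wstar + t • u)) ht0.le h2]
            rw [hn3, hp0, ← hceq] at hk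
            nlinarith [hk, mul_pos ht0 ht0, mul_pos (mul_pos ht0 ht0) ht0]
          · -- wstar ≠ 0
            refine pos_of_small _ (2 * ρ / 3 * (3 / (4 * c) + 1 / (8 * c ^ 3))) (by positivity) ?_
            intro t ht0 ht1
            have hk := hkey t
            have h2 : ‖wstar + t • u‖ ^ 2 = c ^ 2 + t ^ 2 := by rw [hnsq t, hp0]; ring
            set D : ℝ := ‖wstar + t • u‖ with hD
            have hD0 : 0 ≤ D := norm_nonneg _
            have hcne : c ≠ 0 := ne_of_gt hcpos
            set s : ℝ := t ^ 2 / (2 * c) with hsdef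
            have hs : 2 * c * s = t ^ 2 := by rw [hsdef]; field_simp
            have hle : D ≤ c + s := by
              nlinarith [sq_nonneg (D - c), h2, hs, hcpos, mul_pos two_pos hcpos]
            have hcube : D ^ 3 ≤ (c + s) ^ 3 := pow_le_pow_left₀ hD0 hle 3
            have h4 : 3 * c ^ 2 * s = 3 / 2 * c * t ^ 2 := by rw [hsdef]; field_simp
            have h5 : 3 * c * s ^ 2 = 3 / (4 * c) * t ^ 4 := by rw [hsdef]; field_simp; ring
            have h6 : s ^ 3 = 1 / (8 * c ^ 3) * t ^ 6 := by rw [hsdef]; field_simp; ring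
            have h7 : t ^ 4 ≤ t ^ 3 := pow_le_pow_of_le_one ht0.le ht1 (by norm_num)
            have h8 : t ^ 6 ≤ t ^ 3 := pow_le_pow_of_le_one ht0.le ht1 (by norm_num)
            have h9 : 3 / (4 * c) * t ^ 4 ≤ 3 / (4 * c) * t ^ 3 :=
              mul_le_mul_of_nonneg_left h7 (by positivity)
            have h10 : 1 / (8 * c ^ 3) * t ^ 6 ≤ 1 / (8 * c ^ 3) * t ^ 3 :=
              mul_le_mul_of_nonneg_left h8 (by positivity)
            have h3 : (c + s) ^ 3 = c ^ 3 + 3 * c ^ 2 * s + 3 * c * s ^ 2 + s ^ 3 := by ring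
            have hbound : D ^ 3 - c ^ 3
                ≤ 3 / 2 * c * t ^ 2 + (3 / (4 * c) + 1 / (8 * c ^ 3)) * t ^ 3 := by
              have := hcube
              rw [h3] at this
              nlinarith [this, h4, h5, h6, h9, h10]
            have h11 : 0 ≤ 1 / 2 * μ * t ^ 2
                + ρ / 3 * (3 / 2 * c * t ^ 2 + (3 / (4 * c) + 1 / (8 * c ^ 3)) * t ^ 3) := by
              have hmono := mul_le_mul_of_nonneg_left hbound (show (0:ℝ) ≤ ρ / 3 by positivity)
              rw [hp0] at hk
              nlinarith [hk, hmono]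
            nlinarith [h11, mul_pos ht0 ht0, mul_pos hρ hcpos, hcpos]
        linarith
      · -- p ≠ 0 : pick t = -2p, stays on sphere
        have hk := hkey (-2 * p)
        have h2 : ‖wstar + (-2 * p) • u‖ ^ 2 = c ^ 2 := by rw [hnsq]; ring
        have hnrm : ‖wstar + (-2 * p) • u‖ = c :=
          eq_of_sq_eq_sq' (norm_nonneg _) hc0 h2
        rw [hnrm] at hk
        have hp2 : 0 < p ^ 2 := by positivity
        have hfin : 0 ≤ 2 * p ^ 2 * (μ + ρ * c) := by nlinarith [hk]
        nlinarith [hfin, hp2]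
  · -- decomposition identity
    intro w
    have hns : ‖w - wstar‖ ^ 2 = ‖w‖ ^ 2 - 2 * ⟪w, wstar⟫ + ‖wstar‖ ^ 2 :=
      norm_sub_sq_real w wstar
    rw [hb, hns]
    simp only [map_sub, inner_sub_left, inner_sub_right, inner_add_right, inner_neg_right,
      real_inner_smul_right, real_inner_self_eq_norm_sq]
    rw [real_inner_comm wstar w]
    ring
end

section
/- Let f(w) = (1/2) wᵀ A w + bᵀ w + (ρ/3)‖w‖³ with A symmetric, ρ > 0, and unique global minimizer w* satisfying ρ‖w*‖ > γ where γ = −λ_min(A). If w ∈ ℝ^d satisfies ρ‖w‖ > γ − (ρ‖w*‖ − γ), then there exists ϑ > 0 such that ⟨w − w*, ∇f(w)⟩ ≥ ϑ ‖w − w*‖², i.e., f is one-point strongly convex toward w* on the region {w : ρ‖w‖ > γ − (ρ‖w*‖ − γ)}. -/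
open scoped RealInnerProductSpace

section aux
variable {d : ℕ}
local notation "E" => EuclideanSpace ℝ (Fin d)

lemma rayleigh_lb (A : E →L[ℝ] E) (hA : IsSelfAdjoint A) (v : E) :
    sInf (spectrum ℝ A) * ‖v‖ ^ 2 ≤ ⟪v, A v⟫ := by
  rcases eq_or_ne v 0 with rfl | hv
  · simp
  haveI : Nontrivial E := nontrivial_of_ne v 0 hv
  have hT : (A : E →ₗ[ℝ] E).IsSymmetric := hA.isSymmetric
  set μ : ℝ := ⨅ x : { x : E // x ≠ 0 },
      RCLike.re (⟪(A : E →ₗ[ℝ] E) x, (x : E)⟫ : ℝ) / ‖(x : E)‖ ^ 2 with hμ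
  have heig : Module.End.HasEigenvalue (A : E →ₗ[ℝ] E) μ :=
    hT.hasEigenvalue_iInf_of_finiteDimensional
  obtain ⟨x0, hx0⟩ := heig.exists_hasEigenvector
  -- μ ∈ spectrum ℝ A
  have hmem : μ ∈ spectrum ℝ A := by
    rw [spectrum.mem_iff]
    intro h
    have h1 : (algebraMap ℝ (E →L[ℝ] E) μ - A) x0 = 0 := by
      have := hx0.apply_eq_smul
      simp only [ContinuousLinearMap.sub_apply, Algebra.algebraMap_eq_smul_one,
        ContinuousLinearMap.smul_apply, ContinuousLinearMap.one_apply]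
      simp only [ContinuousLinearMap.coe_coe] at this
      rw [this]; simp
    have h2 : x0 = 0 := by
      calc x0 = ((↑h.unit⁻¹ : E →L[ℝ] E) * (↑h.unit : E →L[ℝ] E)) x0 := by
            rw [h.unit.inv_mul]; rfl
        _ = (↑h.unit⁻¹ : E →L[ℝ] E) ((↑h.unit : E →L[ℝ] E) x0) := rfl
        _ = 0 := by rw [h.unit_spec, h1]; simp
    exact hx0.2 h2
  have hbdd : BddBelow (Set.range fun x : { x : E // x ≠ 0 } =>
      RCLike.re (⟪(A : E →ₗ[ℝ] E) x, (x : E)⟫ : ℝ) / ‖(x : E)‖ ^ 2) := by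
    refine ⟨-‖A‖, ?_⟩
    rintro r ⟨⟨x, hx⟩, rfl⟩
    have hx2 : (0:ℝ) < ‖x‖ ^ 2 := pow_pos (norm_pos_iff.mpr hx) 2
    rw [le_div_iff₀ hx2]
    have h1 : |⟪A x, x⟫| ≤ ‖A‖ * ‖x‖ ^ 2 := by
      calc |⟪A x, x⟫| ≤ ‖A x‖ * ‖x‖ := abs_real_inner_le_norm _ _
        _ ≤ (‖A‖ * ‖x‖) * ‖x‖ := by
            have := A.le_opNorm x
            nlinarith [norm_nonneg x, norm_nonneg (A x)]
        _ = ‖A‖ * ‖x‖ ^ 2 := by ring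
    simp only [ContinuousLinearMap.coe_coe, RCLike.re_to_real]
    nlinarith [abs_nonneg ⟪A x, x⟫, neg_abs_le ⟪A x, x⟫]
  have h3 : μ ≤ ⟪A v, v⟫ / ‖v‖ ^ 2 := by
    have := ciInf_le hbdd ⟨v, hv⟩
    simp only [RCLike.re_to_real, ContinuousLinearMap.coe_coe] at this
    exact this
  have h4 : sInf (spectrum ℝ A) ≤ μ := csInf_le (spectrum.isBounded A).bddBelow hmem
  have hv2 : (0:ℝ) < ‖v‖ ^ 2 := pow_pos (norm_pos_iff.mpr hv) 2
  have := (le_div_iff₀ hv2).mp (h4.trans h3)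
  rw [real_inner_comm] at this
  linarith

lemma grad_formula (A : E →L[ℝ] E) (hA : IsSelfAdjoint A) (b : E) (ρ : ℝ) (x : E) :
    HasFDerivAt (fun w : E => (1 / 2) * ⟪w, A w⟫ + ⟪b, w⟫ + (ρ / 3) * ‖w‖ ^ 3)
      (innerSL ℝ (A x + b + (ρ * ‖x‖) • x)) x := by
  have h1 : HasFDerivAt (fun w : E => ⟪w, A w⟫) _ x :=
    (hasFDerivAt_id x).inner ℝ (A.hasFDerivAt)
  have h2 : HasFDerivAt (fun w : E => ⟪b, w⟫) (innerSL ℝ b) x := (innerSL ℝ b).hasFDerivAt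
  have h3' : HasFDerivAt (fun w : E => (‖w‖ ^ 2 : ℝ) ^ (3/2 : ℝ))
      (((3/2 : ℝ) * (‖x‖ ^ 2 : ℝ) ^ ((3:ℝ)/2 - 1)) • (2 • (innerSL ℝ x).comp
        (ContinuousLinearMap.id ℝ E))) x :=
    ((hasFDerivAt_id x).norm_sq).rpow_const (Or.inr (by norm_num))
  have hfun : (fun w : E => (‖w‖ ^ 2 : ℝ) ^ (3/2 : ℝ)) = fun w : E => ‖w‖ ^ 3 := by
    funext w
    rw [← Real.rpow_natCast ‖w‖ 2, ← Real.rpow_mul (norm_nonneg w), ← Real.rpow_natCast ‖w‖ 3]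
    norm_num
  rw [hfun] at h3'
  have h3 : HasFDerivAt (fun w : E => ‖w‖ ^ 3) ((3 * ‖x‖) • (innerSL ℝ x)) x := by
    refine h3'.congr_fderiv ?_
    ext v
    have hx12 : ((‖x‖ ^ 2 : ℝ)) ^ ((3:ℝ)/2 - 1) = ‖x‖ := by
      rw [← Real.rpow_natCast ‖x‖ 2, ← Real.rpow_mul (norm_nonneg x)]
      norm_num
    simp [hx12]
    ring
  have H := ((h1.const_mul (1/2 : ℝ)).add h2).add (h3.const_mul (ρ/3 : ℝ))
  refine H.congr_fderiv ?_
  ext v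
  have hsym : ⟪x, A v⟫ = ⟪v, A x⟫ := by
    have h := hA.isSymmetric x v
    simp only [ContinuousLinearMap.coe_coe] at h
    rw [← h, real_inner_comm]
  simp only [ContinuousLinearMap.add_apply, ContinuousLinearMap.coe_smul', Pi.smul_apply,
    ContinuousLinearMap.coe_comp', Function.comp_apply, ContinuousLinearMap.prod_apply,
    ContinuousLinearMap.coe_id', id_eq, fderivInnerCLM_apply, innerSL_apply_apply, smul_eq_mul,
    inner_add_left, real_inner_smul_left]
  linarith [hsym, real_inner_comm (A x) v]
end aux

/-- One-point strong convexity of the cubic-regularized problem on the benign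
region: if `ρ‖w‖ > γ − (ρ‖w*‖ − γ)` with `γ = −λ_min(A)` and `w*` the unique
global minimizer satisfying `ρ‖w*‖ > γ`, then
`⟨w − w*, ∇f(w)⟩ ≥ ϑ‖w − w*‖²` for some `ϑ > 0`. -/
theorem stmt_8 (d : ℕ)
    (A : EuclideanSpace ℝ (Fin d) →L[ℝ] EuclideanSpace ℝ (Fin d))
    (hA : IsSelfAdjoint A) (b : EuclideanSpace ℝ (Fin d)) (ρ : ℝ) (hρ : 0 < ρ)
    (wstar : EuclideanSpace ℝ (Fin d)) (γ : ℝ) (hγ : γ = -(sInf (spectrum ℝ A)))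
    (hmin : ∀ w : EuclideanSpace ℝ (Fin d),
      (1 / 2) * ⟪wstar, A wstar⟫ + ⟪b, wstar⟫ + (ρ / 3) * ‖wstar‖ ^ 3 ≤
        (1 / 2) * ⟪w, A w⟫ + ⟪b, w⟫ + (ρ / 3) * ‖w‖ ^ 3)
    (huniq : ∀ u : EuclideanSpace ℝ (Fin d),
      (∀ w : EuclideanSpace ℝ (Fin d),
        (1 / 2) * ⟪u, A u⟫ + ⟪b, u⟫ + (ρ / 3) * ‖u‖ ^ 3 ≤
          (1 / 2) * ⟪w, A w⟫ + ⟪b, w⟫ + (ρ / 3) * ‖w‖ ^ 3) → u = wstar)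
    (hstar : ρ * ‖wstar‖ > γ) :
    ∀ w : EuclideanSpace ℝ (Fin d),
      ρ * ‖w‖ > γ - (ρ * ‖wstar‖ - γ) →
      ∃ ϑ : ℝ, 0 < ϑ ∧
        ⟪w - wstar, A w + b + (ρ * ‖w‖) • w⟫ ≥ ϑ * ‖w - wstar‖ ^ 2 := by

  intro w hw
  -- first-order optimality at the global minimizer
  have hloc : IsLocalMin
      (fun w : EuclideanSpace ℝ (Fin d) =>
        (1 / 2) * ⟪w, A w⟫ + ⟪b, w⟫ + (ρ / 3) * ‖w‖ ^ 3) wstar :=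
    Filter.Eventually.of_forall hmin
  have hF := hloc.hasFDerivAt_eq_zero (grad_formula A hA b ρ wstar)
  have hg : A wstar + b + (ρ * ‖wstar‖) • wstar = 0 := by
    have h0 := congrFun (congrArg DFunLike.coe hF)
      (A wstar + b + (ρ * ‖wstar‖) • wstar)
    simp only [innerSL_apply_apply, ContinuousLinearMap.zero_apply] at h0
    exact inner_self_eq_zero.mp h0
  -- gradient decomposition
  have key : ⟪w - wstar, A w + b + (ρ * ‖w‖) • w⟫
      = ⟪w - wstar, A (w - wstar)⟫
        + ρ * (‖w‖ ^ 3 + ‖wstar‖ ^ 3 - (‖w‖ + ‖wstar‖) * ⟪w, wstar⟫) := by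
    have hsplit : A w + b + (ρ * ‖w‖) • w
        = A (w - wstar) + ((ρ * ‖w‖) • w - (ρ * ‖wstar‖) • wstar)
          + (A wstar + b + (ρ * ‖wstar‖) • wstar) := by
      rw [map_sub]; abel
    rw [hsplit, hg, add_zero]
    simp only [inner_add_right, inner_sub_right, inner_sub_left, real_inner_smul_right,
      real_inner_self_eq_norm_sq, real_inner_comm wstar w]
    ring
  have hray : -γ * ‖w - wstar‖ ^ 2 ≤ ⟪w - wstar, A (w - wstar)⟫ := by
    have := rayleigh_lb A hA (w - wstar)
    rw [hγ]; simpa using this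
  have hnorm : ‖w - wstar‖ ^ 2 = ‖w‖ ^ 2 - 2 * ⟪w, wstar⟫ + ‖wstar‖ ^ 2 :=
    norm_sub_sq_real w wstar
  refine ⟨ρ * (‖w‖ + ‖wstar‖) / 2 - γ, by linarith, ?_⟩
  rw [key, hnorm]
  rw [hnorm] at hray
  nlinarith [mul_nonneg (mul_nonneg hρ.le (add_nonneg (norm_nonneg w) (norm_nonneg wstar)))
      (sq_nonneg (‖w‖ - ‖wstar‖)), hray]
end

section
/- Let p, q, r, x, z ≥ 0, β ∈ [0,1), φ ∈ (0,1), ψ > 0, and let (y_t)_{t≥0} be a nonnegative sequence satisfying, for all t ≥ τ: y_{t+1} ≤ p y_t + q y_{t−1} + r β ȳ_{t−2} + x β Σ_{s=τ}^{t−2} β^{t−2−s} y_s + z β^{t−τ+1}, where ȳ_t := Σ_{s=0}^t β^{t−s} y_s. Define θ = (−p + √(p² + 4(q + φ)))/2 and λ = (p + √(p² + 4(q + φ)))/2. If β ≤ λφ/(r + φ + x) and β ≤ λ − 1/ψ, then y_t ≤ λ^{t−τ} c_{τ,β} for all t ≥ τ, where c_{τ,β} is any constant satisfying y_t + θ y_{t−1}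 + φ ȳ_{t−2} + βψz ≤ c_{τ,β} for all t ≤ τ. -/
/-- Master lemma for heavy-ball-type recursive inequalities with memory:
the Lyapunov construction turns the recursion with geometrically weighted
history into geometric decay at rate `λ = (p + √(p² + 4(q+φ)))/2`. -/
theorem stmt_16 (p q r x z β φ ψ : ℝ)
    (hp : 0 ≤ p) (hq : 0 ≤ q) (hr : 0 ≤ r) (hx : 0 ≤ x) (hz : 0 ≤ z)
    (hβ0 : 0 ≤ β) (hβ1 : β < 1) (hφ0 : 0 < φ) (hφ1 : φ < 1) (hψ : 0 < ψ)
    (y : ℕ → ℝ) (hy : ∀ t, 0 ≤ y t) (τ : ℕ)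
    (hrec : ∀ t : ℕ, τ ≤ t →
      y (t + 1) ≤ p * y t + q * y (t - 1)
        + r * β * (∑ s ∈ Finset.range (t - 2 + 1), β ^ (t - 2 - s) * y s)
        + x * β * (∑ s ∈ Finset.Icc τ (t - 2), β ^ (t - 2 - s) * y s)
        + z * β ^ (t - τ + 1))
    (hβa : β ≤ ((p + Real.sqrt (p ^ 2 + 4 * (q + φ))) / 2) * φ / (r + φ + x))
    (hβb : β ≤ (p + Real.sqrt (p ^ 2 + 4 * (q + φ))) / 2 - 1 / ψ)
    (c : ℝ)
    (hc : ∀ t : ℕ, t ≤ τ →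
      y t + ((-p + Real.sqrt (p ^ 2 + 4 * (q + φ))) / 2) * y (t - 1)
        + φ * (∑ s ∈ Finset.range (t - 2 + 1), β ^ (t - 2 - s) * y s)
        + β * ψ * z ≤ c) :
    ∀ t : ℕ, τ ≤ t →
      y t ≤ ((p + Real.sqrt (p ^ 2 + 4 * (q + φ))) / 2) ^ (t - τ) * c := by
  have hpq : (0:ℝ) ≤ p ^ 2 + 4 * (q + φ) := by positivity
  set s := Real.sqrt (p ^ 2 + 4 * (q + φ)) with hs
  have hs2 : s ^ 2 = p ^ 2 + 4 * (q + φ) := Real.sq_sqrt hpq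
  have hs0 : 0 ≤ s := Real.sqrt_nonneg _
  have hsp : p ≤ s := by nlinarith
  set lam := (p + s) / 2 with hlam
  set θ := (-p + s) / 2 with hθ
  have hθ0 : 0 ≤ θ := by rw [hθ]; linarith
  have hlam0 : 0 ≤ lam := by rw [hlam]; linarith
  have hlθ : lam * θ = q + φ := by rw [hlam, hθ]; nlinarith [hs2]
  have hlpθ : lam = p + θ := by rw [hlam, hθ]; ring
  have hA : β * (r + φ + x) ≤ lam * φ := by
    have hpos : (0:ℝ) < r + φ + x := by linarith
    exact (le_div_iff₀ hpos).mp hβa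
  have hB : 1 + ψ * β ≤ lam * ψ := by
    have h1 : (1/ψ) * ψ = 1 := by field_simp
    nlinarith [mul_le_mul_of_nonneg_right hβb hψ.le]
  set G : ℕ → ℝ := fun n => ∑ i ∈ Finset.range (n+1), β ^ (n - i) * y i with hG
  have hGdef : ∀ n : ℕ, G n = ∑ i ∈ Finset.range (n+1), β ^ (n - i) * y i := fun n => by
    rw [hG]
  have hG0 : ∀ n, 0 ≤ G n := fun n => by
    rw [hGdef]
    exact Finset.sum_nonneg fun i _ => mul_nonneg (pow_nonneg hβ0 _) (hy i)
  have hGrec : ∀ n, G (n+1) = β * G n + y (n+1) := by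
    intro n
    rw [hGdef, hGdef, Finset.sum_range_succ, Nat.sub_self, pow_zero, one_mul,
      Finset.mul_sum]
    congr 1
    apply Finset.sum_congr rfl
    intro i hi
    rw [Finset.mem_range] at hi
    rw [show n + 1 - i = (n - i) + 1 by omega, pow_succ]
    ring
  have hG00 : G 0 = y 0 := by rw [hGdef]; simp
  have hGstep : ∀ t : ℕ, G (t-1) ≤ β * G (t-2) + y (t-1) := by
    intro t
    match t with
    | 0 =>
      simp only [Nat.zero_sub]
      rw [hG00]; linarith [mul_nonneg hβ0 (hy 0)]
    | 1 =>
      simp only [show (1:ℕ)-1 = 0 from rfl, show (1:ℕ)-2 = 0 from rfl]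
      rw [hG00]; linarith [mul_nonneg hβ0 (hy 0)]
    | (n+2) =>
      rw [show n+2-1 = n+1 from rfl, show n+2-2 = n from rfl, hGrec n]
  have hS : ∀ m : ℕ, (∑ i ∈ Finset.Icc τ m, β ^ (m - i) * y i) ≤ G m := by
    intro m
    rw [hGdef]
    apply Finset.sum_le_sum_of_subset_of_nonneg
    · intro i hi
      rw [Finset.mem_Icc] at hi
      rw [Finset.mem_range]
      omega
    · intro i _ _
      exact mul_nonneg (pow_nonneg hβ0 _) (hy i)
  set V : ℕ → ℝ := fun t => y t + θ * y (t-1) + φ * G (t-2) + ψ * z * β ^ (t - τ + 1)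
    with hV
  have hVdef : ∀ t : ℕ, V t = y t + θ * y (t-1) + φ * G (t-2) + ψ * z * β ^ (t - τ + 1) :=
    fun t => by rw [hV]
  have hstep : ∀ t : ℕ, τ ≤ t → V (t+1) ≤ lam * V t := by
    intro t ht
    have h1 := hrec t ht
    rw [← hGdef (t-2)] at h1
    have h3 : x * β * (∑ i ∈ Finset.Icc τ (t - 2), β ^ (t - 2 - i) * y i)
        ≤ x * β * G (t-2) :=
      mul_le_mul_of_nonneg_left (hS (t-2)) (by positivity)
    have hA' : β * (r + φ + x) * G (t-2) ≤ lam * φ * G (t-2) :=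
      mul_le_mul_of_nonneg_right hA (hG0 _)
    have hφ2 : φ * G (t-1) ≤ φ * (β * G (t-2) + y (t-1)) :=
      mul_le_mul_of_nonneg_left (hGstep t) hφ0.le
    have hB' : (1 + ψ * β) * (z * β ^ (t - τ + 1)) ≤ lam * ψ * (z * β ^ (t - τ + 1)) :=
      mul_le_mul_of_nonneg_right hB (mul_nonneg hz (pow_nonneg hβ0 _))
    have eq1 : lam * θ * y (t-1) = (q + φ) * y (t-1) := by rw [hlθ]
    have eq2 : lam * y t = p * y t + θ * y t := by rw [hlpθ]; ring
    rw [hVdef (t+1), hVdef t, show t+1-1 = t from rfl, show t+1-2 = t-1 from rfl,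
      show t+1-τ+1 = (t-τ+1)+1 by omega, pow_succ]
    linarith [h1, h3, hA', hφ2, hB', eq1, eq2]
  have hmain : ∀ t : ℕ, τ ≤ t → V t ≤ lam ^ (t - τ) * c := by
    intro t ht
    induction t, ht using Nat.le_induction with
    | base =>
      rw [Nat.sub_self, pow_zero, one_mul, hVdef, Nat.sub_self, pow_one]
      have h := hc τ le_rfl
      rw [← hGdef (τ-2)] at h
      linarith
    | succ n hn ih =>
      calc V (n+1) ≤ lam * V n := hstep n hn
        _ ≤ lam * (lam ^ (n-τ) * c) := mul_le_mul_of_nonneg_left ih hlam0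
        _ = lam ^ (n+1-τ) * c := by
            rw [show n+1-τ = (n-τ)+1 by omega, pow_succ]; ring
  intro t ht
  have h1 := hmain t ht
  have h2 : y t ≤ V t := by
    rw [hVdef]
    have n1 : 0 ≤ θ * y (t-1) := mul_nonneg hθ0 (hy _)
    have n2 : 0 ≤ φ * G (t-2) := mul_nonneg hφ0.le (hG0 _)
    have n3 : 0 ≤ ψ * z * β ^ (t - τ + 1) := by positivity
    linarith
  linarith
end

section
/- Let ∇f(w) = A*(w − w*) − ρ(‖w*‖ − ‖w‖) w where A* is symmetric. If ‖w‖ ≤ R, then ‖∇f(w)‖² ≤ 2(w − w*)ᵀ A*² (w − w*) + 2ρ² ‖w − w*‖² R², and the cross-term bound ⟨w − w*, ∇f(w)⟩ ≥ (w − w*)ᵀ A* (w − w*) + (ρ/2)(‖w‖ − ‖w*‖)‖w − w*‖² + (ρ/2)(‖w*‖ − ‖w‖)²(‖w‖ + ‖w*‖) holds with equality. -/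
open scoped RealInnerProductSpace

/-- Gradient bounds for the cubic-regularized problem written around the
minimizer: with `∇f(w) = A*(w − w*) − ρ(‖w*‖ − ‖w‖)w` and `‖w‖ ≤ R`,
the squared gradient norm bound and the exact cross-term decomposition hold. -/
theorem stmt_19 (d : ℕ)
    (Astar : EuclideanSpace ℝ (Fin d) →L[ℝ] EuclideanSpace ℝ (Fin d))
    (hAstar : IsSelfAdjoint Astar) (ρ R : ℝ) (hρ : 0 < ρ)
    (w wstar : EuclideanSpace ℝ (Fin d)) (hw : ‖w‖ ≤ R) :
    ‖Astar (w - wstar) - (ρ * (‖wstar‖ - ‖w‖)) • w‖ ^ 2 ≤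
        2 * ⟪w - wstar, Astar (Astar (w - wstar))⟫
          + 2 * ρ ^ 2 * ‖w - wstar‖ ^ 2 * R ^ 2 ∧
    ⟪w - wstar, Astar (w - wstar) - (ρ * (‖wstar‖ - ‖w‖)) • w⟫ =
      ⟪w - wstar, Astar (w - wstar)⟫
        + (ρ / 2) * (‖w‖ - ‖wstar‖) * ‖w - wstar‖ ^ 2
        + (ρ / 2) * (‖wstar‖ - ‖w‖) ^ 2 * (‖w‖ + ‖wstar‖) := by
  set u := w - wstar with hu
  have hAsq : ⟪u, Astar (Astar u)⟫ = ‖Astar u‖ ^ 2 := by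
    have h := hAstar.isSymmetric (Astar u) u
    simp only [ContinuousLinearMap.coe_coe] at h
    rw [real_inner_comm, h, real_inner_self_eq_norm_sq]
  constructor
  · have hn : ‖Astar u - (ρ * (‖wstar‖ - ‖w‖)) • w‖ ≤
        ‖Astar u‖ + ‖(ρ * (‖wstar‖ - ‖w‖)) • w‖ := norm_sub_le _ _
    have hsmul : ‖(ρ * (‖wstar‖ - ‖w‖)) • w‖ = |ρ * (‖wstar‖ - ‖w‖)| * ‖w‖ := by
      rw [norm_smul, Real.norm_eq_abs]
    have habs : |‖wstar‖ - ‖w‖| ≤ ‖u‖ := by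
      have := abs_norm_sub_norm_le wstar w
      rwa [norm_sub_rev, ← hu] at this
    have hb : ‖(ρ * (‖wstar‖ - ‖w‖)) • w‖ ≤ ρ * ‖u‖ * R := by
      rw [hsmul, abs_mul, abs_of_pos hρ]
      exact mul_le_mul (mul_le_mul le_rfl habs (abs_nonneg _) hρ.le) hw
        (norm_nonneg _) (by positivity)
    have h0 : (0:ℝ) ≤ ‖Astar u - (ρ * (‖wstar‖ - ‖w‖)) • w‖ := norm_nonneg _
    have h1 : (0:ℝ) ≤ ‖Astar u‖ := norm_nonneg _
    have h2 : (0:ℝ) ≤ ‖(ρ * (‖wstar‖ - ‖w‖)) • w‖ := norm_nonneg _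
    rw [hAsq]
    nlinarith [sq_nonneg (‖Astar u‖ - ρ * ‖u‖ * R), sq_nonneg (‖Astar u‖ - ‖(ρ * (‖wstar‖ - ‖w‖)) • w‖)]
  · have hp : ⟪u, w⟫ = (‖u‖ ^ 2 + ‖w‖ ^ 2 - ‖wstar‖ ^ 2) / 2 := by
      have h1 : ‖u‖ ^ 2 = ‖w‖ ^ 2 - 2 * ⟪w, wstar⟫ + ‖wstar‖ ^ 2 := by
        rw [hu]; exact norm_sub_sq_real w wstar
      have h2 : ⟪u, w⟫ = ‖w‖ ^ 2 - ⟪w, wstar⟫ := by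
        rw [hu, inner_sub_left, real_inner_self_eq_norm_sq, real_inner_comm]
      linarith
    rw [inner_sub_right, inner_smul_right, hp]
    ring
end
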